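/- Let ζ = (1+√(−3))/2, w = [[0,0,−1],[0,1,0],[1,0,0]], and ε = diag(ζ, ζ⁻², ζ). Then the matrix εw lies in SU(2,1;ℤ[ζ]) (i.e., it has determinant 1, entries in ℤ[ζ], and satisfies (εw)* C (εw) = C for C = [[0,0,1/√(−3)],[0,1,0],[−1/√(−3),0,0]]), and εw has multiplicative order exactly 12. -/

import Mathlib

open Matrix Complex

noncomputable def sqrtD (D : ℝ) : ℂ := Complex.I * Real.sqrt |D|

noncomputable def formC (D : ℝ) : Matrix (Fin 3) (Fin 3) ℂ :=
  !![0, 0, 1 / sqrtD D; 0, 1, 0; -(1 / sqrtD D), 0, 0]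

noncomputable def Qform (D : ℝ) (u v : Fin 3 → ℂ) : ℂ :=
  star u ⬝ᵥ (formC D).mulVec v

noncomputable def sqrtm3 : ℂ := Complex.I * Real.sqrt 3

noncomputable def zet : ℂ := (1 + sqrtm3) / 2

noncomputable def eps : Matrix (Fin 3) (Fin 3) ℂ := !![zet, 0, 0; 0, (zet ^ 2)⁻¹, 0; 0, 0, zet]

noncomputable def wmat : Matrix (Fin 3) (Fin 3) ℂ := !![0, 0, -1; 0, 1, 0; 1, 0, 0]

/-!
Factor `ε w = ζ • J` with `J = !![0, 0, -1; 0, -1, 0; 1, 0, 0]` an integer matrix satisfying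
`J² = diag(-1, 1, -1)`, `J⁴ = 1`, `det J = -1` and `Jᵀ C J = C`. Since `ζ` is a unit-modulus
primitive sixth root of unity, `ε w` preserves `C`, has determinant `ζ³ · (-1) = 1`, and
`(ε w)¹² = 1`, while `(ε w)⁶ = J² ≠ 1` and `(ε w)⁴ = ζ⁴ • 1 ≠ 1`.
-/

lemma orderOf_eq_twelve {G : Type*} [Monoid G] {x : G}
    (h12 : x ^ 12 = 1) (h6 : x ^ 6 ≠ 1) (h4 : x ^ 4 ≠ 1) : orderOf x = 12 := by
  refine orderOf_eq_of_pow_and_pow_div_prime (by norm_num) h12 fun p hp hdvd => ?_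
  have : p ≤ 12 := Nat.le_of_dvd (by norm_num) hdvd
  interval_cases p <;>
    first | exact absurd hp (by decide) | exact absurd hdvd (by decide) | assumption

lemma sqrtm3_sq : sqrtm3 ^ 2 = -3 := by
  rw [sqrtm3, mul_pow, I_sq, ← ofReal_pow, Real.sq_sqrt zero_le_three]
  push_cast; ring

lemma zet_sq : zet ^ 2 = zet - 1 := by
  rw [zet]; linear_combination sqrtm3_sq / 4

lemma zet_pow_three : zet ^ 3 = -1 := by linear_combination (zet + 1) * zet_sq

lemma zet_pow_four_ne_one : zet ^ 4 ≠ 1 := by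
  intro h
  have hzet : zet = -1 := by linear_combination (zet ^ 2 + zet) * zet_sq - h
  have := zet_sq
  rw [hzet] at this
  norm_num at this

lemma star_zet_mul_zet : star zet * zet = 1 := by
  have : star zet = 1 - zet := by
    simp only [zet, sqrtm3, star_div₀, star_add, star_one, star_mul', RCLike.star_def, conj_I,
      conj_ofReal, neg_mul, star_ofNat]
    ring
  rw [this]; linear_combination -zet_sq

def jmat : Matrix (Fin 3) (Fin 3) ℤ := !![0, 0, -1; 0, -1, 0; 1, 0, 0]

lemma jmat_sq : jmat ^ 2 = !![-1, 0, 0; 0, 1, 0; 0, 0, -1] := by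
  rw [jmat, sq, mul_fin_three]; norm_num

lemma jmat_pow_four : jmat ^ 4 = 1 := by
  rw [show 4 = 2 * 2 from rfl, pow_mul, jmat_sq, sq, mul_fin_three, one_fin_three]; norm_num

lemma det_jmat : jmat.det = -1 := by
  rw [jmat, det_fin_three]; simp

lemma jmat_conjTranspose_mul_mul_antidiag (c : ℂ) :
    (jmat.map (Int.castRingHom ℂ))ᴴ * !![0, 0, c; 0, 1, 0; -c, 0, 0] *
      jmat.map (Int.castRingHom ℂ) = !![0, 0, c; 0, 1, 0; -c, 0, 0] := by
  rw [jmat]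
  ext i j; fin_cases i <;> fin_cases j <;> simp [mul_apply, Fin.sum_univ_three]

lemma eps_mul_wmat : eps * wmat = zet • jmat.map (Int.castRingHom ℂ) := by
  have : (zet ^ 2)⁻¹ = -zet := inv_eq_of_mul_eq_one_right (by linear_combination -zet_pow_three)
  rw [eps, wmat, jmat, this, mul_fin_three]
  ext i j; fin_cases i <;> fin_cases j <;> simp

lemma det_eps_mul_wmat : (eps * wmat).det = 1 := by
  rw [eps_mul_wmat, det_smul, ← RingHom.mapMatrix_apply, ← RingHom.map_det, det_jmat]
  simp only [Fintype.card_fin, eq_intCast, Int.cast_neg, Int.cast_one, mul_neg, mul_one]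
  linear_combination -zet_pow_three

lemma conjTranspose_eps_mul_wmat_mul_formC_mul :
    (eps * wmat)ᴴ * formC (-3) * (eps * wmat) = formC (-3) := by
  rw [eps_mul_wmat, conjTranspose_smul, Matrix.smul_mul, Matrix.smul_mul, Matrix.mul_smul,
    smul_smul, star_zet_mul_zet, one_smul, formC]
  exact jmat_conjTranspose_mul_mul_antidiag _

lemma eps_mul_wmat_pow (n : ℕ) :
    (eps * wmat) ^ n = zet ^ n • (jmat ^ n).map (Int.castRingHom ℂ) := by
  rw [eps_mul_wmat, smul_pow, Matrix.map_pow]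

lemma eps_mul_wmat_pow_four : (eps * wmat) ^ 4 = zet ^ 4 • 1 := by
  rw [eps_mul_wmat_pow, jmat_pow_four, Matrix.map_one _ (map_zero _) (map_one _)]

lemma eps_mul_wmat_pow_six : (eps * wmat) ^ 6 = (jmat ^ 2).map (Int.castRingHom ℂ) := by
  have hzet : zet ^ 6 = 1 := by linear_combination (zet ^ 3 - 1) * zet_pow_three
  have hjmat : jmat ^ 6 = jmat ^ 2 := by
    rw [show 6 = 4 + 2 from rfl, pow_add, jmat_pow_four, one_mul]
  rw [eps_mul_wmat_pow, hzet, hjmat, one_smul]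

lemma orderOf_eps_mul_wmat : orderOf (eps * wmat) = 12 := by
  apply orderOf_eq_twelve
  · rw [show 12 = 6 * 2 from rfl, pow_mul, eps_mul_wmat_pow_six, ← Matrix.map_pow, ← pow_mul,
      jmat_pow_four, Matrix.map_one _ (map_zero _) (map_one _)]
  · rw [eps_mul_wmat_pow_six, jmat_sq]
    intro h
    have h00 := congrFun (congrFun h 0) 0
    norm_num at h00
  · rw [eps_mul_wmat_pow_four]
    intro h
    exact zet_pow_four_ne_one (by simpa using congrFun (congrFun h 0) 0)

theorem stmt7 :
    (eps * wmat).det = 1 ∧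
    (∀ i j, ∃ a b : ℤ, (eps * wmat) i j = (a : ℂ) + (b : ℂ) * zet) ∧
    (eps * wmat)ᴴ * formC (-3) * (eps * wmat) = formC (-3) ∧
    orderOf (eps * wmat) = 12 :=
  ⟨det_eps_mul_wmat, fun i j => ⟨0, jmat i j, by simp [eps_mul_wmat, mul_comm]⟩,
    conjTranspose_eps_mul_wmat_mul_formC_mul, orderOf_eps_mul_wmat⟩
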